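/- arXiv:2206.15425 — 4 statements merged into one kernel-verified Lean document; each statement's English description precedes it below -/
import Mathlib

section
/- Let 𝒢 be a closed family of sets of strings (in the product topology on characteristic functions) and H a set of strings that hits 𝒢. Then there exist a finite subset H₀ ⊆ H and a clopen family 𝒢' with 𝒢 ⊆ 𝒢' such that H₀ hits 𝒢'. -/
/-- A set of strings `H` hits a family `𝒢` of sets of strings (sets of strings are
identified with their characteristic functions `List Bool → Bool`) if `T ∩ H ≠ ∅`
for every `T ∈ 𝒢`. -/
def Hits (H : Set (List Bool)) (𝒢 : Set (List Bool → Bool)) : Prop :=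
  ∀ T ∈ 𝒢, ∃ σ ∈ H, T σ = true

lemma clopen_eval (σ : List Bool) :
    IsClopen {T : List Bool → Bool | T σ = true} := by
  have : Continuous fun T : List Bool → Bool => T σ := continuous_apply σ
  exact ⟨(isClosed_discrete {true}).preimage this, (isOpen_discrete {true}).preimage this⟩

/-- If `𝒢` is closed (in the product topology on characteristic
functions) and `H` hits `𝒢`, then some finite `H₀ ⊆ H` hits a clopen `𝒢' ⊇ 𝒢`. -/
theorem stmt_2 (𝒢 : Set (List Bool → Bool)) (hcl : IsClosed 𝒢)
    (H : Set (List Bool)) (hH : Hits H 𝒢) :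
    ∃ H₀ : Finset (List Bool), ↑H₀ ⊆ H ∧
      ∃ 𝒢' : Set (List Bool → Bool), IsClopen 𝒢' ∧ 𝒢 ⊆ 𝒢' ∧ Hits (↑H₀) 𝒢' := by
  have hcomp : IsCompact 𝒢 := hcl.isCompact
  set U : H → Set (List Bool → Bool) := fun σ => {T | T σ.1 = true} with hU
  have hcover : 𝒢 ⊆ ⋃ σ : H, U σ := by
    intro T hT
    obtain ⟨σ, hσH, hσ⟩ := hH T hT
    exact Set.mem_iUnion.2 ⟨⟨σ, hσH⟩, hσ⟩
  obtain ⟨t, ht⟩ := hcomp.elim_finite_subcover U (fun σ => (clopen_eval σ.1).isOpen) hcover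
  refine ⟨t.image Subtype.val, ?_, ⋃ σ ∈ t, U σ, ?_, ht, ?_⟩
  · intro σ hσ
    obtain ⟨τ, _, rfl⟩ := Finset.mem_image.1 hσ
    exact τ.2
  · exact (t.finite_toSet.isClopen_biUnion fun σ _ => clopen_eval σ.1)
  · intro T hT
    obtain ⟨σ, hσt, hσ⟩ := Set.mem_iUnion₂.1 hT
    exact ⟨σ.1, Finset.mem_coe.2 (Finset.mem_image.2 ⟨σ, hσt, rfl⟩), hσ⟩
end

section
/- Let P ⊆ 2^ω be a closed set and l : ℕ → ℕ strictly increasing such that ∑_i 2^{l(i) − l(i+1)} < μ(P). Then there exists a nonempty closed set Q ⊆ P with the l-branching property: for every i, every string σ of length l(i) with [σ] ∩ Q ≠ ∅ has at least two extensions τ of length l(i+1) with [τ] ∩ Q ≠ ∅. -/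
open scoped ENNReal

/-- The length-`n` prefix of a point of Cantor space `2^ω = ℕ → Bool`, as a binary string. -/
def pre (x : ℕ → Bool) (n : ℕ) : List Bool := (List.range n).map x

/-- `σ` is a (finite) prefix of `x ∈ 2^ω`. -/
def PrefOf (σ : List Bool) (x : ℕ → Bool) : Prop := pre x σ.length = σ

/-- The cylinder `[σ] = {x ∈ 2^ω : σ ⪯ x}`. -/
def cyl (σ : List Bool) : Set (ℕ → Bool) := {x | PrefOf σ x}

/-- `[V] = ⋃_{σ ∈ V} [σ]`. -/
def cylSet (V : Set (List Bool)) : Set (ℕ → Bool) := ⋃ σ ∈ V, cyl σ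

/-- A tree: a set of binary strings closed under prefixes. -/
def IsTree (T : Set (List Bool)) : Prop := ∀ σ ∈ T, ∀ τ : List Bool, τ <+: σ → τ ∈ T

/-- A pruned tree: every node has a proper extension in the tree. -/
def Pruned (T : Set (List Bool)) : Prop := ∀ σ ∈ T, ∃ τ ∈ T, σ <+: τ ∧ σ ≠ τ

/-- The set `[T]` of paths of a tree `T`. -/
def paths (T : Set (List Bool)) : Set (ℕ → Bool) := {x | ∀ n, pre x n ∈ T}

/-- The fair-coin (uniform) product measure on Cantor space, characterized by its
values `μ [σ] = 2^{-|σ|}` on cylinders (this determines `μ` uniquely). -/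
def IsFairCoin (μ : MeasureTheory.Measure (ℕ → Bool)) : Prop :=
  ∀ σ : List Bool, μ (cyl σ) = 2⁻¹ ^ σ.length

/-- A closed set `Q ⊆ 2^ω` has the `l`-branching property: for every `i`, every string
of length `l i` whose cylinder meets `Q` has at least two extensions of length
`l (i+1)` whose cylinders meet `Q`. -/
def LBranchingProp (l : ℕ → ℕ) (Q : Set (ℕ → Bool)) : Prop :=
  ∀ i : ℕ, ∀ σ : List Bool, σ.length = l i → (cyl σ ∩ Q).Nonempty →
    ∃ τ₁ τ₂ : List Bool, σ <+: τ₁ ∧ σ <+: τ₂ ∧ τ₁.length = l (i + 1) ∧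
      τ₂.length = l (i + 1) ∧ τ₁ ≠ τ₂ ∧ (cyl τ₁ ∩ Q).Nonempty ∧ (cyl τ₂ ∩ Q).Nonempty

/-! Prune `P` repeatedly: each stage removes the cylinder of every string of length `l i` that has
fewer than two extensions of length `l (i + 1)` meeting the current set, and `Q` is the
intersection of the stages. Since there are finitely many such extensions and the stages are
compact, a single stage already sees which of them meet `Q`, so `Q` has the branching property.
A string `σ` of length `l i` is charged only at the first stage where it fails to branch, and
then the current set inside `[σ]` lies in one cylinder of length `l (i + 1)`. Hence level `i`
removes measure at most `2 ^ l i * 2 ^ (-l (i + 1))`, so `μ (P \ Q) < μ P` and `Q ≠ ∅`. -/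

open MeasureTheory Set Filter

lemma length_pre (x : ℕ → Bool) (n : ℕ) : (pre x n).length = n := by simp [pre]

lemma mem_cyl_pre (x : ℕ → Bool) (n : ℕ) : x ∈ cyl (pre x n) := by
  simp [cyl, PrefOf, length_pre]

lemma pre_prefix_pre (x : ℕ → Bool) {m n : ℕ} (h : m ≤ n) : pre x m <+: pre x n := by
  apply List.IsPrefix.map
  rw [List.prefix_iff_eq_take, List.take_range, List.length_range, Nat.min_eq_left h]

lemma prefix_pre_of_mem_cyl {x : ℕ → Bool} {σ : List Bool} {n : ℕ} (hx : x ∈ cyl σ)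
    (hn : σ.length ≤ n) : σ <+: pre x n :=
  (hx : pre x σ.length = σ) ▸ pre_prefix_pre x hn

lemma cyl_eq_iInter (σ : List Bool) :
    cyl σ = ⋂ k : Fin σ.length, (fun x : ℕ → Bool => x k) ⁻¹' {σ[(k : ℕ)]} := by
  ext x
  simp only [mem_iInter, mem_preimage, mem_singleton_iff, cyl, PrefOf, mem_ofPred_eq]
  constructor
  · intro h k
    have hk : (k : ℕ) < (pre x σ.length).length := by simp [length_pre]
    simpa [pre] using List.getElem_of_eq h hk
  · intro h
    exact List.ext_getElem (length_pre x σ.length) fun k _ hk => by simpa [pre] using h ⟨k, hk⟩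

lemma isOpen_cyl (σ : List Bool) : IsOpen (cyl σ) := by
  rw [cyl_eq_iInter]
  exact isOpen_iInter_of_finite fun k => (isOpen_discrete _).preimage (continuous_apply _)

lemma isClosed_cyl (σ : List Bool) : IsClosed (cyl σ) := by
  rw [cyl_eq_iInter]
  exact isClosed_iInter fun k => (isClosed_discrete _).preimage (continuous_apply _)

lemma finite_setOf_length_eq (n : ℕ) : {σ : List Bool | σ.length = n}.Finite := by
  refine (finite_range (List.ofFn : (Fin n → Bool) → List Bool)).subset ?_
  rintro σ (rfl : σ.length = n)
  exact ⟨fun i => σ[(i : ℕ)], List.ofFn_getElem⟩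

lemma measure_biUnion_length_eq_le (μ : Measure (ℕ → Bool)) {A : List Bool → Set (ℕ → Bool)}
    {n : ℕ} {c : ℝ≥0∞} (hA : ∀ σ : List Bool, σ.length = n → μ (A σ) ≤ c) :
    μ (⋃ σ ∈ {σ : List Bool | σ.length = n}, A σ) ≤ 2 ^ n * c := by
  have hunion :
      ⋃ σ ∈ {σ : List Bool | σ.length = n}, A σ = ⋃ f : Fin n → Bool, A (List.ofFn f) := by
    ext x
    simp only [mem_iUnion, mem_ofPred_eq, exists_prop]
    constructor
    · rintro ⟨σ, rfl, hx⟩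
      exact ⟨fun i => σ[(i : ℕ)], by rwa [List.ofFn_getElem]⟩
    · rintro ⟨f, hx⟩
      exact ⟨_, List.length_ofFn, hx⟩
  calc μ (⋃ σ ∈ {σ : List Bool | σ.length = n}, A σ)
      ≤ ∑ f : Fin n → Bool, μ (A (List.ofFn f)) := by
        rw [hunion]; exact measure_iUnion_fintype_le μ _
    _ ≤ ∑ _f : Fin n → Bool, c := Finset.sum_le_sum fun f _ => hA _ List.length_ofFn
    _ = 2 ^ n * c := by simp

lemma two_pow_mul_inv_two_pow {a b : ℕ} (h : a ≤ b) :
    (2 : ℝ≥0∞) ^ a * 2⁻¹ ^ b = 2⁻¹ ^ (b - a) := by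
  obtain ⟨d, rfl⟩ := Nat.exists_eq_add_of_le h
  rw [Nat.add_sub_cancel_left, pow_add, ← mul_assoc, ← mul_pow,
    ENNReal.mul_inv_cancel two_ne_zero ENNReal.ofNat_ne_top, one_pow, one_mul]

def Branches (T : Set (ℕ → Bool)) (σ : List Bool) (m : ℕ) : Prop :=
  ∃ τ₁ τ₂ : List Bool, σ <+: τ₁ ∧ σ <+: τ₂ ∧ τ₁.length = m ∧ τ₂.length = m ∧ τ₁ ≠ τ₂ ∧
    (cyl τ₁ ∩ T).Nonempty ∧ (cyl τ₂ ∩ T).Nonempty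

lemma Branches.mono_nonempty {T T' : Set (ℕ → Bool)} {σ : List Bool} {m : ℕ}
    (h : Branches T σ m)
    (hT : ∀ τ : List Bool, τ.length = m → (cyl τ ∩ T).Nonempty → (cyl τ ∩ T').Nonempty) :
    Branches T' σ m := by
  obtain ⟨τ₁, τ₂, h₁, h₂, hl₁, hl₂, hne, hT₁, hT₂⟩ := h
  exact ⟨τ₁, τ₂, h₁, h₂, hl₁, hl₂, hne, hT τ₁ hl₁ hT₁, hT τ₂ hl₂ hT₂⟩

lemma exists_cyl_superset_of_not_branches {T : Set (ℕ → Bool)} {σ : List Bool} {m : ℕ}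
    (hm : σ.length ≤ m) (h : ¬ Branches T σ m) :
    ∃ τ : List Bool, τ.length = m ∧ cyl σ ∩ T ⊆ cyl τ := by
  by_cases hT : (cyl σ ∩ T).Nonempty
  · obtain ⟨x, hxσ, hxT⟩ := hT
    refine ⟨pre x m, length_pre x m, fun y ⟨hyσ, hyT⟩ => ?_⟩
    by_contra hy
    refine h ⟨pre y m, pre x m, prefix_pre_of_mem_cyl hyσ hm, prefix_pre_of_mem_cyl hxσ hm,
      length_pre y m, length_pre x m, fun he => hy (he ▸ mem_cyl_pre y m),
      ⟨y, mem_cyl_pre y m, hyT⟩, ⟨x, mem_cyl_pre x m, hxT⟩⟩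
  · exact ⟨List.replicate m false, List.length_replicate, by
      rw [not_nonempty_iff_eq_empty.mp hT]; exact empty_subset _⟩

lemma measure_cyl_inter_le_of_not_branches {μ : Measure (ℕ → Bool)} (hμ : IsFairCoin μ)
    {T : Set (ℕ → Bool)} {σ : List Bool} {m : ℕ} (hm : σ.length ≤ m) (h : ¬ Branches T σ m) :
    μ (cyl σ ∩ T) ≤ 2⁻¹ ^ m := by
  obtain ⟨τ, hτ, hsub⟩ := exists_cyl_superset_of_not_branches hm h
  exact (measure_mono hsub).trans_eq (hτ ▸ hμ τ)

lemma measure_biUnion_not_branches_le {μ : Measure (ℕ → Bool)} (hμ : IsFairCoin μ)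
    {S : ℕ → Set (ℕ → Bool)} (hS : Antitone S) {σ : List Bool} {m : ℕ} (hm : σ.length ≤ m) :
    μ (⋃ n, ⋃ (_ : ¬ Branches (S n) σ m), cyl σ ∩ S n) ≤ 2⁻¹ ^ m := by
  classical
  by_cases h : ∃ n, ¬ Branches (S n) σ m
  · calc μ (⋃ n, ⋃ (_ : ¬ Branches (S n) σ m), cyl σ ∩ S n)
        ≤ μ (cyl σ ∩ S (Nat.find h)) := measure_mono <| iUnion₂_subset fun n hn =>
          inter_subset_inter_right _ (hS (Nat.find_min' h hn))
      _ ≤ 2⁻¹ ^ m := measure_cyl_inter_le_of_not_branches hμ hm (Nat.find_spec h)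
  · push Not at h
    simp [h]

lemma Antitone.sdiff_iInter_subset {α : Type*} {S : ℕ → Set α} (hS : Antitone S) :
    S 0 \ ⋂ n, S n ⊆ ⋃ n, S n \ S (n + 1) := by
  classical
  rintro x ⟨hx₀, hx⟩
  have hex : ∃ n, x ∉ S (n + 1) := by
    obtain ⟨n, hn⟩ := mem_iInter.not.mp hx |> not_forall.mp
    exact ⟨n, fun h => hn (hS n.le_succ h)⟩
  refine mem_iUnion.mpr ⟨Nat.find hex, ?_, Nat.find_spec hex⟩
  cases h : Nat.find hex with
  | zero => exact hx₀
  | succ n => exact not_not.mp (Nat.find_min hex (h ▸ n.lt_succ_self))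

lemma IsCompact.eventually_inter_nonempty_imp {X : Type*} [TopologicalSpace X] {K : Set X}
    (hK : IsCompact K) {S : ℕ → Set X} (hS : Antitone S) (hcl : ∀ n, IsClosed (S n)) :
    ∀ᶠ n in atTop, (K ∩ S n).Nonempty → (K ∩ ⋂ n, S n).Nonempty := by
  by_cases h : (K ∩ ⋂ n, S n).Nonempty
  · exact Eventually.of_forall fun _ _ => h
  · obtain ⟨n, hn⟩ := hK.elim_directed_family_closed S hcl (not_nonempty_iff_eq_empty.mp h)
      hS.directed_ge
    filter_upwards [eventually_ge_atTop n] with k hk hne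
    exact absurd (hne.mono (inter_subset_inter_right _ (hS hk))) (by simp [hn])

def prune (l : ℕ → ℕ) (T : Set (ℕ → Bool)) : Set (ℕ → Bool) :=
  T \ ⋃ (i : ℕ) (σ : List Bool) (_ : σ.length = l i) (_ : ¬ Branches T σ (l (i + 1))), cyl σ

lemma IsClosed.prune {T : Set (ℕ → Bool)} (hT : IsClosed T) (l : ℕ → ℕ) :
    IsClosed (prune l T) :=
  hT.sdiff <| isOpen_iUnion fun _ => isOpen_iUnion fun σ =>
    isOpen_iUnion fun _ => isOpen_iUnion fun _ => isOpen_cyl σ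

lemma branches_of_mem_prune {l : ℕ → ℕ} {T : Set (ℕ → Bool)} {x : ℕ → Bool} {σ : List Bool}
    {i : ℕ} (hx : x ∈ prune l T) (hxσ : x ∈ cyl σ) (hσ : σ.length = l i) :
    Branches T σ (l (i + 1)) := by
  by_contra h
  exact hx.2 (mem_iUnion.mpr ⟨i, mem_iUnion.mpr ⟨σ, mem_iUnion.mpr ⟨hσ, mem_iUnion.mpr ⟨h, hxσ⟩⟩⟩⟩)

lemma sdiff_prune_subset (l : ℕ → ℕ) (T : Set (ℕ → Bool)) :
    T \ prune l T ⊆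
      ⋃ (i : ℕ) (σ ∈ {σ : List Bool | σ.length = l i}) (_ : ¬ Branches T σ (l (i + 1))),
        cyl σ ∩ T := by
  rintro x ⟨hxT, hx⟩
  have hxU := not_not.mp fun h => hx ⟨hxT, h⟩
  simp only [mem_iUnion, mem_ofPred_eq] at hxU ⊢
  obtain ⟨i, σ, hσ, hbr, hxσ⟩ := hxU
  exact ⟨i, σ, hσ, hbr, hxσ, hxT⟩

lemma antitone_iterate_prune (l : ℕ → ℕ) (P : Set (ℕ → Bool)) :
    Antitone fun n => (prune l)^[n] P :=
  antitone_nat_of_succ_le fun n => by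
    rw [Function.iterate_succ_apply']; exact sdiff_subset

lemma isClosed_iterate_prune (l : ℕ → ℕ) {P : Set (ℕ → Bool)} (hP : IsClosed P) (n : ℕ) :
    IsClosed ((prune l)^[n] P) := by
  induction n with
  | zero => exact hP
  | succ n ih => rw [Function.iterate_succ_apply']; exact ih.prune l

lemma sdiff_iInter_iterate_prune_subset (l : ℕ → ℕ) (P : Set (ℕ → Bool)) :
    P \ ⋂ n, (prune l)^[n] P ⊆
      ⋃ (i : ℕ) (σ ∈ {σ : List Bool | σ.length = l i}) (n : ℕ)
        (_ : ¬ Branches ((prune l)^[n] P) σ (l (i + 1))), cyl σ ∩ (prune l)^[n] P := by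
  intro x hx
  obtain ⟨n, hn⟩ := mem_iUnion.mp ((antitone_iterate_prune l P).sdiff_iInter_subset hx)
  rw [Function.iterate_succ_apply'] at hn
  have := sdiff_prune_subset l _ hn
  simp only [mem_iUnion, mem_ofPred_eq] at this ⊢
  obtain ⟨i, σ, hσ, hbr, hxσ⟩ := this
  exact ⟨i, σ, hσ, n, hbr, hxσ⟩

lemma measure_sdiff_iInter_iterate_prune_le {μ : Measure (ℕ → Bool)} (hμ : IsFairCoin μ)
    {l : ℕ → ℕ} (hl : Monotone l) (P : Set (ℕ → Bool)) :
    μ (P \ ⋂ n, (prune l)^[n] P) ≤ ∑' i : ℕ, (2 : ℝ≥0∞)⁻¹ ^ (l (i + 1) - l i) :=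
  calc μ (P \ ⋂ n, (prune l)^[n] P)
      ≤ ∑' i : ℕ, μ (⋃ (σ ∈ {σ : List Bool | σ.length = l i}) (n : ℕ)
          (_ : ¬ Branches ((prune l)^[n] P) σ (l (i + 1))), cyl σ ∩ (prune l)^[n] P) :=
        (measure_mono (sdiff_iInter_iterate_prune_subset l P)).trans (measure_iUnion_le _)
    _ ≤ ∑' i : ℕ, (2 : ℝ≥0∞) ^ l i * 2⁻¹ ^ l (i + 1) :=
        ENNReal.tsum_le_tsum fun i => measure_biUnion_length_eq_le μ fun _ hσ =>
          measure_biUnion_not_branches_le hμ (antitone_iterate_prune l P)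
            (hσ ▸ hl i.le_succ)
    _ = ∑' i : ℕ, (2 : ℝ≥0∞)⁻¹ ^ (l (i + 1) - l i) :=
        tsum_congr fun i => two_pow_mul_inv_two_pow (hl i.le_succ)

lemma lBranchingProp_iInter_iterate_prune (l : ℕ → ℕ) {P : Set (ℕ → Bool)} (hP : IsClosed P) :
    LBranchingProp l (⋂ n, (prune l)^[n] P) := by
  intro i σ hσ ⟨x, hxσ, hxQ⟩
  have hev : ∀ᶠ n in atTop, ∀ τ ∈ {τ : List Bool | τ.length = l (i + 1)},
      (cyl τ ∩ (prune l)^[n] P).Nonempty → (cyl τ ∩ ⋂ n, (prune l)^[n] P).Nonempty :=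
    (eventually_all_finite (finite_setOf_length_eq _)).mpr fun τ _ =>
      (isClosed_cyl τ).isCompact.eventually_inter_nonempty_imp (antitone_iterate_prune l P)
        (isClosed_iterate_prune l hP)
  obtain ⟨n, hn⟩ := hev.exists
  have hx : x ∈ prune l ((prune l)^[n] P) := by
    rw [← Function.iterate_succ_apply' (prune l)]; exact mem_iInter.mp hxQ (n + 1)
  exact (branches_of_mem_prune hx hxσ hσ).mono_nonempty hn

/-- If `P` is closed and `∑_i 2^{l(i) - l(i+1)} < μ(P)` for a strictly
increasing `l`, then there is a nonempty closed `Q ⊆ P` with the `l`-branching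
property. -/
theorem stmt_4 (μ : MeasureTheory.Measure (ℕ → Bool)) (hμ : IsFairCoin μ)
    (P : Set (ℕ → Bool)) (hP : IsClosed P) (l : ℕ → ℕ) (hl : StrictMono l)
    (hsum : ∑' i : ℕ, (2 : ℝ≥0∞)⁻¹ ^ (l (i + 1) - l i) < μ P) :
    ∃ Q : Set (ℕ → Bool), Q.Nonempty ∧ IsClosed Q ∧ Q ⊆ P ∧ LBranchingProp l Q := by
  refine ⟨⋂ n, (prune l)^[n] P, ?_, isClosed_iInter (isClosed_iterate_prune l hP),
    iInter_subset (fun n => (prune l)^[n] P) 0, lBranchingProp_iInter_iterate_prune l hP⟩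
  rw [nonempty_iff_ne_empty]
  intro hQ
  have hdiff := measure_sdiff_iInter_iterate_prune_le hμ hl.monotone P
  rw [hQ, sdiff_empty] at hdiff
  exact (hdiff.trans_lt hsum).false
end

section
/- Let Q ⊆ 2^ω, r ∈ ℤ, l : ℕ → ℕ strictly increasing with ∑_i 2^{l(i) − l(i+1)} < ∞, g : ℕ → ℕ strictly increasing, and let P be an arbitrary predicate on pairs (σ, H) of a binary string σ and a finite set of strings H. Call a family (H_σ) of finite sets of strings indexed by strings σ of length at most n a finite r-envelope of length n if for every index σ: (1) μ([H_σ] ∩ Q) ≤ 2^{r − |σ|} + ∑_{i ≥ g(|σ|)} 2^{l(i) − l(i+1)}; (2) P(σ, H_σ) holds; (3) H_σ ⊆ 2^{l(g(|σ|))}; and (4) if |σ| < n, then μ(([H_σ] \ ([H_{σ0}] ∪ [H_{σ1}])) ∩ Q) ≤ ∑_{g(|σ|) ≤ i < g(|σ|+1)} 2^{l(i) − l(i+1)}. An infinite r-envelope is a family indexed by all strings satisfying (1)–(4) at every σ. If for every n there exists a finite r-envelope of length n, then there exists an infinite r-envelope. -/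
open scoped ENNReal

noncomputable def tailSum (l : ℕ → ℕ) (k : ℕ) : ℝ≥0∞ :=
  ∑' i : ℕ, if k ≤ i then (2 : ℝ≥0∞)⁻¹ ^ (l (i + 1) - l i) else 0

noncomputable def midSum (l : ℕ → ℕ) (a b : ℕ) : ℝ≥0∞ :=
  ∑ i ∈ Finset.Ico a b, (2 : ℝ≥0∞)⁻¹ ^ (l (i + 1) - l i)

def EnvCond (μ : MeasureTheory.Measure (ℕ → Bool)) (Q : Set (ℕ → Bool)) (r : ℤ)
    (l g : ℕ → ℕ) (P : List Bool → Finset (List Bool) → Prop)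
    (H : List Bool → Finset (List Bool)) (σ : List Bool) : Prop :=
  μ (cylSet ↑(H σ) ∩ Q) ≤ 2 ^ (r - (σ.length : ℤ)) + tailSum l (g σ.length) ∧
    P σ (H σ) ∧ ∀ τ ∈ H σ, τ.length = l (g σ.length)

def EnvCond4 (μ : MeasureTheory.Measure (ℕ → Bool)) (Q : Set (ℕ → Bool))
    (l g : ℕ → ℕ) (H : List Bool → Finset (List Bool)) (σ : List Bool) : Prop :=
  μ ((cylSet ↑(H σ) \ (cylSet ↑(H (σ ++ [false])) ∪ cylSet ↑(H (σ ++ [true])))) ∩ Q) ≤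
    midSum l (g σ.length) (g (σ.length + 1))

def FiniteEnvelope (μ : MeasureTheory.Measure (ℕ → Bool)) (Q : Set (ℕ → Bool)) (r : ℤ)
    (l g : ℕ → ℕ) (P : List Bool → Finset (List Bool) → Prop)
    (H : List Bool → Finset (List Bool)) (n : ℕ) : Prop :=
  ∀ σ : List Bool, σ.length ≤ n →
    EnvCond μ Q r l g P H σ ∧ (σ.length < n → EnvCond4 μ Q l g H σ)

def InfiniteEnvelope (μ : MeasureTheory.Measure (ℕ → Bool)) (Q : Set (ℕ → Bool)) (r : ℤ)
    (l g : ℕ → ℕ) (P : List Bool → Finset (List Bool) → Prop)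
    (H : List Bool → Finset (List Bool)) : Prop :=
  ∀ σ : List Bool, EnvCond μ Q r l g P H σ ∧ EnvCond4 μ Q l g H σ

lemma envCond_congr {μ : MeasureTheory.Measure (ℕ → Bool)} {Q : Set (ℕ → Bool)} {r : ℤ}
    {l g : ℕ → ℕ} {P : List Bool → Finset (List Bool) → Prop}
    {H H' : List Bool → Finset (List Bool)} {σ : List Bool} (h : H σ = H' σ) :
    EnvCond μ Q r l g P H σ ↔ EnvCond μ Q r l g P H' σ := by
  unfold EnvCond; rw [h]

lemma envCond4_congr {μ : MeasureTheory.Measure (ℕ → Bool)} {Q : Set (ℕ → Bool)}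
    {l g : ℕ → ℕ} {H H' : List Bool → Finset (List Bool)} {σ : List Bool}
    (h0 : H σ = H' σ) (h1 : H (σ ++ [false]) = H' (σ ++ [false]))
    (h2 : H (σ ++ [true]) = H' (σ ++ [true])) :
    EnvCond4 μ Q l g H σ ↔ EnvCond4 μ Q l g H' σ := by
  unfold EnvCond4; rw [h0, h1, h2]

lemma ultrafilter_pigeonhole {α β : Type*} (U : Ultrafilter α) (f : α → β)
    {S : Set β} (hS : S.Finite) (h : {n | f n ∈ S} ∈ U) :
    ∃ v, {n | f n = v} ∈ U := by
  have : (⋃ v ∈ S, {n | f n = v}) ∈ U := by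
    refine U.toFilter.mem_of_superset h ?_
    intro n hn
    exact Set.mem_biUnion hn rfl
  rcases (Ultrafilter.finite_biUnion_mem_iff hS).mp this with ⟨v, _, hv⟩
  exact ⟨v, hv⟩

/-- If there are finite `r`-envelopes of every length, then there is an
infinite `r`-envelope. -/
theorem stmt_8 (μ : MeasureTheory.Measure (ℕ → Bool)) (hμ : IsFairCoin μ)
    (Q : Set (ℕ → Bool)) (r : ℤ) (l : ℕ → ℕ) (hl : StrictMono l)
    (hsum : ∑' i : ℕ, (2 : ℝ≥0∞)⁻¹ ^ (l (i + 1) - l i) < ⊤)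
    (g : ℕ → ℕ) (hg : StrictMono g)
    (P : List Bool → Finset (List Bool) → Prop)
    (hfin : ∀ n : ℕ, ∃ H : List Bool → Finset (List Bool), FiniteEnvelope μ Q r l g P H n) :
    ∃ H : List Bool → Finset (List Bool), InfiniteEnvelope μ Q r l g P H := by
  classical
  choose Hn hHn using hfin
  set U : Ultrafilter ℕ := Filter.hyperfilter ℕ with hU
  -- large sets of n ≥ k
  have hatTop : ∀ k : ℕ, {n : ℕ | k ≤ n} ∈ U := by
    intro k
    have : {n : ℕ | n < k}.Finite := Set.finite_Iio k
    have := Filter.compl_mem_hyperfilter_of_finite this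
    simpa [Set.compl_setOf, not_lt] using this
  -- for each σ, the values Hn n σ (for n ≥ |σ|) lie in a finite set
  have key : ∀ σ : List Bool, ∃ v : Finset (List Bool), {n | Hn n σ = v} ∈ U := by
    intro σ
    set L := l (g σ.length)
    have hSfin : {s : Finset (List Bool) | ∀ τ ∈ s, τ.length = L}.Finite := by
      have hT : {τ : List Bool | τ.length = L}.Finite := List.finite_length_eq Bool L
      have : {s : Finset (List Bool) | ∀ τ ∈ s, τ.length = L}
          ⊆ ((↑·) : Finset (List Bool) → Set (List Bool)) ⁻¹' {A : Set (List Bool) | A ⊆ {τ | τ.length = L}} := by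
        intro s hs A hA
        exact hs A hA
      exact Set.Finite.subset
        (Set.Finite.preimage (Set.injOn_of_injective Finset.coe_injective)
          hT.finite_subsets) this
    apply ultrafilter_pigeonhole U (fun n => Hn n σ) hSfin
    refine U.toFilter.mem_of_superset (hatTop σ.length) ?_
    intro n hn
    exact ((hHn n σ hn).1).2.2
  choose H hH using key
  refine ⟨H, ?_⟩
  intro σ
  -- intersect large sets
  have hbig : {n : ℕ | σ.length + 1 ≤ n} ∩ ({n | Hn n σ = H σ} ∩
      ({n | Hn n (σ ++ [false]) = H (σ ++ [false])} ∩
       {n | Hn n (σ ++ [true]) = H (σ ++ [true])})) ∈ U :=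
    Filter.inter_mem (hatTop _) (Filter.inter_mem (hH σ)
      (Filter.inter_mem (hH _) (hH _)))
  have hne : (U : Filter ℕ).NeBot := U.neBot
  rcases Filter.nonempty_of_mem hbig with ⟨n, hn1, hn2, hn3, hn4⟩
  have h1 := hHn n σ (le_trans (Nat.le_succ _) hn1)
  constructor
  · exact (envCond_congr hn2).mp h1.1
  · have h4 := h1.2 hn1
    exact (envCond4_congr hn2 hn3 hn4).mp h4
end

section
/- Let U be an optimal prefix-free machine and K = K_U. Let ℓ, m : ℕ → ℕ be computable and strictly increasing with ℓ(0) = m(0) = 0 and ℓ(n+1) − ℓ(n) ≥ m(n+1) − m(n) for all n. Define H_λ = {λ} (λ the empty string) and, recursively, for every σ of length m(n) and ρ of length m(n+1) − m(n), H_{σ∗ρ} = {τ' of length ℓ(n+1) : τ∗ρ is a prefix of τ' for some τ ∈ H_σ}. For a tree T, let Φ(T) be the downward closure of ⋃_n {σ of length m(n) : T ∩ H_σ ≠ ∅}. Then for every T ∈ 𝒯_ℓ (the pruned trees in which every node of length ℓ(n) has one or two extensions of length ℓ(n+1)), Φ(T) is an infinite pruned tree; moreover, there is a constant d, independent of T and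 c, such that for every c: if K(σ) ≥ |σ| − c for every σ ∈ T, then K(σ) ≥ |σ| − c − d for every σ ∈ Φ(T). In particular, if T is path-incompressible then Φ(T) is path-incompressible. -/
open scoped ENNReal

/-- A set of strings is prefix-free: no element is a proper prefix of another. -/
def PrefixFreeSet (D : Set (List Bool)) : Prop :=
  ∀ ρ₁ ∈ D, ∀ ρ₂ ∈ D, ρ₁ <+: ρ₂ → ρ₁ = ρ₂

/-- A prefix-free machine: a partial computable function on binary strings whose
domain is prefix-free. -/
structure PrefixFreeMachine where
  M : List Bool →. List Bool
  partrec : Partrec M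
  prefixFree : PrefixFreeSet M.Dom

/-- `K_M(σ)`: the least length of a string `ρ` with `M(ρ) = σ` (`⊤` if there is none). -/
noncomputable def Kof (W : PrefixFreeMachine) (σ : List Bool) : ℕ∞ :=
  ⨅ (ρ : List Bool) (_ : σ ∈ W.M ρ), (ρ.length : ℕ∞)

/-- A prefix-free machine `U` is optimal if `K_U ≤ K_M + c` for every prefix-free
machine `M` and some constant `c = c(M)`. -/
def Optimal (U : PrefixFreeMachine) : Prop :=
  ∀ W : PrefixFreeMachine, ∃ c : ℕ, ∀ σ : List Bool, Kof U σ ≤ Kof W σ + c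

/-- A pruned tree is path-incompressible if `K(σ) ≥ |σ| - c` for all `σ ∈ T` and some
constant `c` (stated additively to avoid truncated subtraction). -/
def PathIncompressible (U : PrefixFreeMachine) (T : Set (List Bool)) : Prop :=
  ∃ c : ℕ, ∀ σ ∈ T, (σ.length : ℕ∞) ≤ Kof U σ + c

/-- The class `𝒯_ℓ` of pruned trees containing the empty string in which every node of
length `ℓ n` has one or two extensions of length `ℓ (n+1)`. -/
def Tell (ℓ : ℕ → ℕ) (T : Set (List Bool)) : Prop :=
  IsTree T ∧ Pruned T ∧ [] ∈ T ∧
    ∀ n : ℕ, ∀ σ ∈ T, σ.length = ℓ n →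
      1 ≤ {τ : List Bool | τ ∈ T ∧ σ <+: τ ∧ τ.length = ℓ (n + 1)}.ncard ∧
        {τ : List Bool | τ ∈ T ∧ σ <+: τ ∧ τ.length = ℓ (n + 1)}.ncard ≤ 2

/-- The family `(H_σ)`: `Hfam ℓ m n σ` is `H_σ` for `σ` of length `m n`. We have
`H_λ = {λ}` and, writing `σ = σ₀ ∗ ρ` with `|σ₀| = m n`,
`H_{σ₀ ∗ ρ} = {τ' ∈ 2^{ℓ (n+1)} : ∃ τ ∈ H_{σ₀}, τ ∗ ρ ⪯ τ'}`. -/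
def Hfam (ℓ m : ℕ → ℕ) : ℕ → List Bool → Set (List Bool)
  | 0, _ => {[]}
  | n + 1, σ =>
      {τ' : List Bool | τ'.length = ℓ (n + 1) ∧
        ∃ τ ∈ Hfam ℓ m n (σ.take (m n)), (τ ++ σ.drop (m n)) <+: τ'}

/-- `Φ(T)`: the downward closure of `⋃_n {σ ∈ 2^{m n} : T ∩ H_σ ≠ ∅}`. -/
def Phi (ℓ m : ℕ → ℕ) (T : Set (List Bool)) : Set (List Bool) :=
  {η : List Bool | ∃ n : ℕ, ∃ σ : List Bool,
    σ.length = m n ∧ (T ∩ Hfam ℓ m n σ).Nonempty ∧ η <+: σ}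

/-!
`Φ(T)` is a tree by construction. It is infinite and pruned because every `τ ∈ T ∩ H_σ`,
`|σ| = m n`, has an extension `τ' ∈ T` of length `ℓ (n + 1)`, and then `τ' ∈ H_{σ ∗ ρ}` for
the block `ρ` of `τ'` of length `m (n + 1) - m n` that follows `τ`.

An element of `H_σ`, `|σ| = m n`, is the interleaving of the blocks of `σ` with `ℓ n - m n`
free bits. So if `σ ∈ Φ(T)` and `m k ≤ |σ| < m (k + 1)`, then `σ` together with `ℓ k - m k`
suitable free bits computably determines a string `τ ∈ T` of length `|σ| + (ℓ k - m k)`. As the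
number of free bits is computable from `|σ|`, a prefix-free machine can read a `U`-program
for `σ` followed by the free bits and output `τ`; hence `K(τ) ≤ K(σ) + (ℓ k - m k) + d`, and
`K(τ) ≥ |τ| - c` yields `K(σ) ≥ |σ| - c - d`.
-/

open Nat.Partrec (Code)
open Encodable (encode)

theorem Computable.ite {α σ : Type*} [Primcodable α] [Primcodable σ] {c : α → Prop}
    [DecidablePred c] {f g : α → σ} (hc : Computable fun a => decide (c a))
    (hf : Computable f) (hg : Computable g) :
    Computable fun a => if c a then f a else g a :=
  (Computable.cond hc hf hg).of_eq fun a => by by_cases h : c a <;> simp [h]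

theorem List.take_eq_take_of_le {α : Type*} {l₁ l₂ : List α} {a b : ℕ}
    (h : l₁.take a = l₂.take a) (hb : b ≤ a) : l₁.take b = l₂.take b := by
  simpa [List.take_take, min_eq_left hb] using congrArg (List.take b) h

theorem PrefixFreeMachine.eq_of_mem_take (U : PrefixFreeMachine) {x y σ σ' : List Bool}
    {i j : ℕ} (hxy : x <+: y) (hi : i ≤ x.length) (hj : j ≤ y.length)
    (hσ : σ ∈ U.M (x.take i)) (hσ' : σ' ∈ U.M (y.take j)) : i = j ∧ σ = σ' := by
  have hdom : x.take i ∈ U.M.Dom := Part.dom_iff_mem.2 ⟨σ, hσ⟩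
  have hdom' : y.take j ∈ U.M.Dom := Part.dom_iff_mem.2 ⟨σ', hσ'⟩
  have heq : x.take i = y.take j := by
    rcases List.prefix_or_prefix_of_prefix ((List.take_prefix i x).trans hxy)
      (List.take_prefix j y) with h | h
    · exact U.prefixFree _ hdom _ hdom' h
    · exact (U.prefixFree _ hdom' _ hdom h).symm
  refine ⟨?_, Part.mem_unique hσ (heq ▸ hσ')⟩
  simpa [List.length_take, hi, hj] using congrArg List.length heq

theorem Kof_le_length {W : PrefixFreeMachine} {σ ρ : List Bool} (h : σ ∈ W.M ρ) :
    Kof W σ ≤ ρ.length :=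
  iInf₂_le ρ h

section Advice

variable (c : Code) (f : List Bool → List Bool → List Bool) (len : List Bool → ℕ)

/-- Stage `⟨i, s⟩` of the search: if `c` halts within `s` steps on the first `i` bits of `x`
with output `σ`, and exactly `len σ` bits of `x` remain, output `f σ` of these bits. -/
def adviceStep (x : List Bool) (n : ℕ) : Option (List Bool) :=
  (Code.evaln n.unpair.2 c (encode (x.take n.unpair.1))).bind fun y =>
    (Encodable.decode (α := List Bool) y).bind fun σ =>
      if x.length = n.unpair.1 + len σ then some (f σ (x.drop n.unpair.1)) else none

def adviceFun : List Bool →. List Bool := fun x => Nat.rfindOpt (adviceStep c f len x)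

variable {c f len}

theorem computable₂_adviceStep (hf : Computable₂ f) (hlen : Computable len) :
    Computable₂ (adviceStep c f len) := by
  have hi : Computable fun p : List Bool × ℕ => p.2.unpair.1 :=
    (Primrec.fst.comp (Primrec.unpair.comp Primrec.snd)).to_comp
  have hs : Computable fun p : List Bool × ℕ => p.2.unpair.2 :=
    (Primrec.snd.comp (Primrec.unpair.comp Primrec.snd)).to_comp
  have hrun : Computable fun p : List Bool × ℕ =>
      Code.evaln p.2.unpair.2 c (encode (p.1.take p.2.unpair.1)) :=
    Code.primrec_evaln.to_comp.comp ((hs.pair (Computable.const c)).pair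
      (Computable.encode.comp (Primrec.list_take.to_comp.comp hi Computable.fst)))
  refine Computable.option_bind hrun (Computable.option_bind
    (Computable.decode.comp Computable.snd) (Computable.ite ?_ ?_ (Computable.const none)))
  · exact (Primrec.eq.decide.to_comp.comp
      (Primrec.list_length.to_comp.comp (Computable.fst.comp (Computable.fst.comp Computable.fst)))
      (Primrec.nat_add.to_comp.comp (hi.comp (Computable.fst.comp Computable.fst))
        (hlen.comp Computable.snd)))
  · exact Computable.option_some.comp (hf.comp Computable.snd
      (Primrec.list_drop.to_comp.comp (hi.comp (Computable.fst.comp Computable.fst))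
        (Computable.fst.comp (Computable.fst.comp Computable.fst))))

variable {U : PrefixFreeMachine} (hc : ∀ l, c.eval (encode l) = (U.M l).map encode)
include hc

theorem exists_of_adviceStep_eq_some {x v : List Bool} {n : ℕ}
    (h : adviceStep c f len x n = some v) :
    ∃ i σ, σ ∈ U.M (x.take i) ∧ x.length = i + len σ ∧ v = f σ (x.drop i) := by
  simp only [adviceStep, Option.bind_eq_some_iff] at h
  obtain ⟨y, hy, σ, hσ, h⟩ := h
  obtain ⟨σ', hσ', rfl⟩ := (Part.mem_map_iff _).1 (hc _ ▸ Code.evaln_sound hy)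
  rw [Encodable.encodek, Option.some_inj] at hσ
  subst hσ
  split_ifs at h with hlen
  exact ⟨_, σ', hσ', hlen, (Option.some_inj.1 h).symm⟩

theorem exists_adviceStep_eq_some {σ p pad : List Bool} (hσ : σ ∈ U.M p)
    (hpad : pad.length = len σ) : ∃ n, adviceStep c f len (p ++ pad) n = some (f σ pad) := by
  obtain ⟨s, hs⟩ := Code.evaln_complete.1 (hc p ▸ Part.mem_map encode hσ)
  refine ⟨Nat.pair p.length s, ?_⟩
  simp [adviceStep, Option.mem_def.1 hs, hpad]

theorem exists_of_mem_adviceFun {x v : List Bool} (h : v ∈ adviceFun c f len x) :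
    ∃ i σ, σ ∈ U.M (x.take i) ∧ x.length = i + len σ ∧ v = f σ (x.drop i) :=
  let ⟨_, hn⟩ := Nat.rfindOpt_spec h
  exists_of_adviceStep_eq_some hc hn

theorem mem_adviceFun {σ p pad : List Bool} (hσ : σ ∈ U.M p) (hpad : pad.length = len σ) :
    f σ pad ∈ adviceFun c f len (p ++ pad) := by
  obtain ⟨n, hn⟩ := exists_adviceStep_eq_some hc hσ hpad
  have hdom : (adviceFun c f len (p ++ pad)).Dom := Nat.rfindOpt_dom.2 ⟨n, _, hn⟩
  obtain ⟨i, σ', hσ', hlen, hv⟩ := exists_of_mem_adviceFun hc (Part.get_mem hdom)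
  obtain ⟨rfl, rfl⟩ := U.eq_of_mem_take (List.prefix_refl _) (by omega) (by simp : p.length ≤ _)
    hσ' (by rwa [List.take_left])
  rw [List.drop_left] at hv
  exact hv ▸ Part.get_mem hdom

theorem prefixFreeSet_adviceFun_dom : PrefixFreeSet (adviceFun c f len).Dom := by
  intro x hx x' hx' hxx'
  obtain ⟨i, σ, hσ, hlen, -⟩ := exists_of_mem_adviceFun hc (Part.get_mem hx)
  obtain ⟨i', σ', hσ', hlen', -⟩ := exists_of_mem_adviceFun hc (Part.get_mem hx')
  obtain ⟨rfl, rfl⟩ := U.eq_of_mem_take hxx' (by omega) (by omega) hσ hσ'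
  exact hxx'.eq_of_length (by omega)

end Advice

theorem PrefixFreeMachine.exists_advice (U : PrefixFreeMachine)
    {f : List Bool → List Bool → List Bool} (hf : Computable₂ f)
    {len : List Bool → ℕ} (hlen : Computable len) :
    ∃ W : PrefixFreeMachine, ∀ σ p pad, σ ∈ U.M p → pad.length = len σ →
      f σ pad ∈ W.M (p ++ pad) := by
  obtain ⟨c, hc⟩ := Code.exists_code.1 U.partrec
  have hc' : ∀ l, c.eval (encode l) = (U.M l).map encode := fun l => by
    simp [hc, Encodable.encodek]
  exact ⟨⟨adviceFun c f len, Partrec.rfindOpt (computable₂_adviceStep hf hlen),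
    prefixFreeSet_adviceFun_dom hc'⟩, fun σ p pad hσ hpad => mem_adviceFun hc' hσ hpad⟩

theorem Optimal.exists_Kof_apply_le {U : PrefixFreeMachine} (hU : Optimal U)
    {f : List Bool → List Bool → List Bool} (hf : Computable₂ f)
    {len : List Bool → ℕ} (hlen : Computable len) :
    ∃ d : ℕ, ∀ σ pad, pad.length = len σ → Kof U (f σ pad) ≤ Kof U σ + pad.length + d := by
  obtain ⟨W, hW⟩ := U.exists_advice hf hlen
  obtain ⟨d, hd⟩ := hU W
  refine ⟨d, fun σ pad hpad => (hd _).trans (add_le_add_left ?_ _)⟩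
  simp only [Kof, ENat.iInf_add]
  refine le_iInf₂ fun p hp => (Kof_le_length (hW σ p pad hp hpad)).trans ?_
  simp

section Gap

variable {ℓ m : ℕ → ℕ} (hm : StrictMono m) (hgap : ∀ n, m (n + 1) - m n ≤ ℓ (n + 1) - ℓ n)
include hm hgap

theorem add_block_le (n : ℕ) : ℓ n + (m (n + 1) - m n) ≤ ℓ (n + 1) := by
  have := hm (Nat.lt_add_one n)
  have := hgap n
  omega

theorem m_le_ℓ (hm0 : m 0 = 0) (n : ℕ) : m n ≤ ℓ n := by
  induction n with
  | zero => omega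
  | succ n ih => have := add_block_le hm hgap n; omega

theorem monotone_ℓ_sub_m (hm0 : m 0 = 0) : Monotone fun n => ℓ n - m n :=
  monotone_nat_of_le_succ fun n => by
    have := add_block_le hm hgap n
    have := m_le_ℓ hm hgap hm0 n
    omega

end Gap

section Interleave

variable (ℓ m : ℕ → ℕ)

/-- For `|σ| = m k` and `|pad| = ℓ k - m k` this is the element of `H_σ` whose free bits are
`pad`: block `[m j, m (j+1))` of `σ` is followed by block `[ℓ j - m j, ℓ (j+1) - m (j+1))`
of `pad`. -/
def interleave (σ pad : List Bool) : ℕ → List Bool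
  | 0 => []
  | k + 1 => interleave σ pad k ++ (σ.take (m (k + 1))).drop (m k) ++
      (pad.take (ℓ (k + 1) - m (k + 1))).drop (ℓ k - m k)

variable {ℓ m}

theorem interleave_congr (hm : Monotone m) (hfree : Monotone fun n => ℓ n - m n)
    {σ₁ σ₂ pad₁ pad₂ : List Bool} :
    ∀ {k}, σ₁.take (m k) = σ₂.take (m k) → pad₁.take (ℓ k - m k) = pad₂.take (ℓ k - m k) →
      interleave ℓ m σ₁ pad₁ k = interleave ℓ m σ₂ pad₂ k
  | 0, _, _ => rfl
  | k + 1, hσ, hpad => by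
    rw [interleave, interleave, hσ, hpad,
      interleave_congr hm hfree (List.take_eq_take_of_le hσ (hm (Nat.le_add_right k 1)))
        (List.take_eq_take_of_le hpad (hfree (Nat.le_add_right k 1)))]

theorem length_interleave (hℓ0 : ℓ 0 = 0) (hm : StrictMono m) (hm0 : m 0 = 0)
    (hgap : ∀ n, m (n + 1) - m n ≤ ℓ (n + 1) - ℓ n) {σ pad : List Bool} :
    ∀ {k}, m k ≤ σ.length → ℓ k - m k ≤ pad.length → (interleave ℓ m σ pad k).length = ℓ k
  | 0, _, _ => hℓ0.symm
  | k + 1, hσ, hpad => by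
    have hmk := hm (Nat.lt_add_one k)
    have : ℓ k - m k ≤ ℓ (k + 1) - m (k + 1) := monotone_ℓ_sub_m hm hgap hm0 (Nat.le_add_right k 1)
    have := add_block_le hm hgap k
    have := m_le_ℓ hm hgap hm0 k
    rw [interleave, List.length_append, List.length_append,
      length_interleave hℓ0 hm hm0 hgap (by omega) (by omega)]
    simp only [List.length_drop, List.length_take, min_eq_left hσ, min_eq_left hpad]
    omega

theorem interleave_prefix_of_le (σ pad : List Bool) {j k : ℕ} (h : j ≤ k) :
    interleave ℓ m σ pad j <+: interleave ℓ m σ pad k := by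
  induction k, h using Nat.le_induction with
  | base => exact List.prefix_refl _
  | succ k _ ih => exact ih.trans ((List.prefix_append _ _).trans (List.prefix_append _ _))

theorem interleave_append_block_prefix {σ : List Bool} (pad : List Bool)
    {k n : ℕ} (hσ : σ.length ≤ m n) (hk : k ≤ n) :
    interleave ℓ m σ pad k ++ (σ.take (m (k + 1))).drop (m k) <+: interleave ℓ m σ pad n := by
  rcases hk.lt_or_eq with hk | rfl
  · exact (List.prefix_append _ _).trans (interleave_prefix_of_le σ pad hk)
  · rw [List.drop_eq_nil_of_le (by simp; omega), List.append_nil]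

theorem length_of_mem_Hfam (hℓ0 : ℓ 0 = 0) {n : ℕ} {σ τ : List Bool}
    (h : τ ∈ Hfam ℓ m n σ) : τ.length = ℓ n := by
  cases n with
  | zero => simp_all [Hfam]
  | succ n => exact h.1

theorem exists_interleave_eq_of_mem_Hfam (hℓ0 : ℓ 0 = 0) (hm : StrictMono m) (hm0 : m 0 = 0)
    (hgap : ∀ n, m (n + 1) - m n ≤ ℓ (n + 1) - ℓ n) :
    ∀ {n} {σ τ : List Bool}, σ.length = m n → τ ∈ Hfam ℓ m n σ →
      ∃ pad : List Bool, pad.length = ℓ n - m n ∧ interleave ℓ m σ pad n = τ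
  | 0, _, τ, _, h => ⟨[], by simp [hℓ0], by simp_all [Hfam, interleave]⟩
  | n + 1, σ, τ, hσ, ⟨hτ, τ₀, hτ₀, hpre⟩ => by
    have hmn := hm (Nat.lt_add_one n)
    obtain ⟨pad₀, hpad₀, rfl⟩ :=
      exists_interleave_eq_of_mem_Hfam hℓ0 hm hm0 hgap (by simp; omega) hτ₀
    have hτ₀len := length_of_mem_Hfam hℓ0 hτ₀
    set ρ := σ.drop (m n)
    set extra := τ.drop (ℓ n + (m (n + 1) - m n))
    have := add_block_le hm hgap n
    have := m_le_ℓ hm hgap hm0 n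
    have : ℓ n - m n ≤ ℓ (n + 1) - m (n + 1) := monotone_ℓ_sub_m hm hgap hm0 (Nat.le_add_right n 1)
    have hextra : extra.length = ℓ (n + 1) - (ℓ n + (m (n + 1) - m n)) := by simp [extra, hτ]
    refine ⟨pad₀ ++ extra, by simp only [List.length_append]; omega, ?_⟩
    have hhead : interleave ℓ m σ (pad₀ ++ extra) n = interleave ℓ m (σ.take (m n)) pad₀ n :=
      interleave_congr hm.monotone (monotone_ℓ_sub_m hm hgap hm0) (by simp)
        (by rw [← hpad₀, List.take_left, List.take_length])
    have hτeq : τ = interleave ℓ m (σ.take (m n)) pad₀ n ++ ρ ++ extra := by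
      rw [List.prefix_iff_eq_take.1 hpre]
      simp [ρ, extra, hτ₀len, hσ]
    have hblock : (σ.take (m (n + 1))).drop (m n) = ρ := by rw [← hσ, List.take_length]
    have hfree : ((pad₀ ++ extra).take (ℓ (n + 1) - m (n + 1))).drop (ℓ n - m n) = extra := by
      rw [List.take_of_length_le (by simp only [List.length_append]; omega), ← hpad₀,
        List.drop_left]
    rw [interleave, hhead, hblock, hfree, hτeq]

section Phi

variable {ℓ m : ℕ → ℕ} {T : Set (List Bool)}

theorem isTree_Phi (ℓ m : ℕ → ℕ) (T : Set (List Bool)) : IsTree (Phi ℓ m T) :=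
  fun _ ⟨n, σ, hσ, hne, hpre⟩ _ h => ⟨n, σ, hσ, hne, h.trans hpre⟩

theorem Tell.exists_Hfam_succ (hT : Tell ℓ T) (hℓ0 : ℓ 0 = 0) (hm : StrictMono m)
    (hgap : ∀ n, m (n + 1) - m n ≤ ℓ (n + 1) - ℓ n) {n : ℕ} {σ : List Bool}
    (hσ : σ.length = m n) (hne : (T ∩ Hfam ℓ m n σ).Nonempty) :
    ∃ ρ : List Bool, ρ.length = m (n + 1) - m n ∧ (T ∩ Hfam ℓ m (n + 1) (σ ++ ρ)).Nonempty := by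
  obtain ⟨τ, hτT, hτ⟩ := hne
  have hτlen := length_of_mem_Hfam hℓ0 hτ
  obtain ⟨τ', hτ'T, hττ', hτ'len⟩ :=
    Set.nonempty_of_ncard_ne_zero (Nat.one_le_iff_ne_zero.1 (hT.2.2.2 n τ hτT hτlen).1)
  have := add_block_le hm hgap n
  refine ⟨(τ'.drop (ℓ n)).take (m (n + 1) - m n), by simp; omega, τ', hτ'T, hτ'len, τ,
    by rwa [← hσ, List.take_left], ?_⟩
  rw [← hσ, List.drop_left, List.prefix_iff_eq_take.1 hττ', hτlen, ← List.take_add]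
  exact List.take_prefix _ _

theorem Tell.exists_Hfam (hT : Tell ℓ T) (hℓ0 : ℓ 0 = 0) (hm : StrictMono m) (hm0 : m 0 = 0)
    (hgap : ∀ n, m (n + 1) - m n ≤ ℓ (n + 1) - ℓ n) (n : ℕ) :
    ∃ σ : List Bool, σ.length = m n ∧ (T ∩ Hfam ℓ m n σ).Nonempty := by
  induction n with
  | zero => exact ⟨[], hm0.symm, [], hT.2.2.1, rfl⟩
  | succ n ih =>
    obtain ⟨σ, hσ, hne⟩ := ih
    obtain ⟨ρ, hρ, hne'⟩ := hT.exists_Hfam_succ hℓ0 hm hgap hσ hne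
    exact ⟨σ ++ ρ, by have := hm (Nat.lt_add_one n); simp; omega, hne'⟩

theorem Tell.pruned_Phi (hT : Tell ℓ T) (hℓ0 : ℓ 0 = 0) (hm : StrictMono m)
    (hgap : ∀ n, m (n + 1) - m n ≤ ℓ (n + 1) - ℓ n) : Pruned (Phi ℓ m T) := by
  rintro η ⟨n, σ, hσ, hne, hpre⟩
  obtain ⟨ρ, hρ, hne'⟩ := hT.exists_Hfam_succ hℓ0 hm hgap hσ hne
  have := hm (Nat.lt_add_one n)
  have hlen : (σ ++ ρ).length = m (n + 1) := by simp; omega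
  refine ⟨σ ++ ρ, ⟨n + 1, σ ++ ρ, hlen, hne', List.prefix_refl _⟩,
    hpre.trans (List.prefix_append _ _), fun h => ?_⟩
  have := hpre.length_le
  rw [h, hlen] at this
  omega

theorem Tell.infinite_Phi (hT : Tell ℓ T) (hℓ0 : ℓ 0 = 0) (hm : StrictMono m) (hm0 : m 0 = 0)
    (hgap : ∀ n, m (n + 1) - m n ≤ ℓ (n + 1) - ℓ n) : (Phi ℓ m T).Infinite := by
  choose σ hσ hne using hT.exists_Hfam hℓ0 hm hm0 hgap
  refine Set.infinite_of_injective_forall_mem (f := σ) (fun a b h => hm.injective ?_)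
    fun n => ⟨n, σ n, hσ n, hne n, List.prefix_refl _⟩
  rw [← hσ, ← hσ, h]

end Phi

section Reconstruct

variable (ℓ m : ℕ → ℕ)

def level (t : ℕ) : ℕ := Nat.findGreatest (fun k => m k ≤ t) t

def padLength (σ : List Bool) : ℕ := ℓ (level m σ.length) - m (level m σ.length)

def reconstruct (σ pad : List Bool) : List Bool :=
  interleave ℓ m σ pad (level m σ.length) ++ σ.drop (m (level m σ.length))

variable {ℓ m}

theorem m_level_le (hm0 : m 0 = 0) (t : ℕ) : m (level m t) ≤ t :=
  Nat.findGreatest_spec (P := fun k => m k ≤ t) (Nat.zero_le t) (by simp [hm0])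

theorem lt_m_level_succ (hm : StrictMono m) (t : ℕ) : t < m (level m t + 1) := by
  by_contra! h
  have := Nat.le_findGreatest (P := fun k => m k ≤ t) (hm.le_apply.trans h) h
  exact Nat.not_succ_le_self _ this

theorem computable_level (hmc : Computable m) : Computable (level m) := by
  have hrec : ∀ t n, Nat.rec (motive := fun _ => ℕ) 0
      (fun j IH => if m (j + 1) ≤ t then j + 1 else IH) n = Nat.findGreatest (m · ≤ t) n :=
    fun t n => by induction n <;> simp [Nat.findGreatest_succ, *]
  have hj : Computable fun a : ℕ × ℕ × ℕ => a.2.1 + 1 :=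
    Computable.succ.comp (Computable.fst.comp Computable.snd)
  have hstep : Computable₂ fun (t : ℕ) (p : ℕ × ℕ) => if m (p.1 + 1) ≤ t then p.1 + 1 else p.2 :=
    Computable.ite (Primrec.nat_le.decide.to_comp.comp (hmc.comp hj) Computable.fst) hj
      (Computable.snd.comp Computable.snd)
  exact (Computable.nat_rec Computable.id (Computable.const 0) hstep).of_eq fun t => hrec t t

theorem computable_padLength (hℓc : Computable ℓ) (hmc : Computable m) :
    Computable (padLength ℓ m) :=
  have hk := (computable_level hmc).comp Primrec.list_length.to_comp
  Primrec.nat_sub.to_comp.comp (hℓc.comp hk) (hmc.comp hk)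

theorem computable₂_interleave (hℓc : Computable ℓ) (hmc : Computable m) :
    Computable₂ fun (p : List Bool × List Bool) (k : ℕ) => interleave ℓ m p.1 p.2 k := by
  have hrec : ∀ σ pad k, Nat.rec (motive := fun _ => List Bool) []
      (fun j IH => IH ++ (σ.take (m (j + 1))).drop (m j) ++
        (pad.take (ℓ (j + 1) - m (j + 1))).drop (ℓ j - m j)) k = interleave ℓ m σ pad k :=
    fun σ pad k => by
      induction k with
      | zero => rfl
      | succ k ih => rw [interleave, ← ih]
  have hj : Computable fun a : ((List Bool × List Bool) × ℕ) × ℕ × List Bool => a.2.1 :=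
    Computable.fst.comp Computable.snd
  have hσ : Computable fun a : ((List Bool × List Bool) × ℕ) × ℕ × List Bool => a.1.1.1 :=
    Computable.fst.comp (Computable.fst.comp Computable.fst)
  have hpad : Computable fun a : ((List Bool × List Bool) × ℕ) × ℕ × List Bool => a.1.1.2 :=
    Computable.snd.comp (Computable.fst.comp Computable.fst)
  have htake := Primrec.list_take (α := Bool) |>.to_comp
  have hdrop := Primrec.list_drop (α := Bool) |>.to_comp
  have happ := Primrec.list_append (α := Bool) |>.to_comp
  have hsub := Primrec.nat_sub.to_comp
  have hstep : Computable₂ fun (a : (List Bool × List Bool) × ℕ) (p : ℕ × List Bool) =>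
      p.2 ++ (a.1.1.take (m (p.1 + 1))).drop (m p.1) ++
        (a.1.2.take (ℓ (p.1 + 1) - m (p.1 + 1))).drop (ℓ p.1 - m p.1) :=
    happ.comp (happ.comp (Computable.snd.comp Computable.snd)
        (hdrop.comp (hmc.comp hj) (htake.comp (hmc.comp (Computable.succ.comp hj)) hσ)))
      (hdrop.comp (hsub.comp (hℓc.comp hj) (hmc.comp hj))
        (htake.comp (hsub.comp (hℓc.comp (Computable.succ.comp hj))
          (hmc.comp (Computable.succ.comp hj))) hpad))
  exact (Computable.nat_rec Computable.snd (Computable.const []) hstep).of_eq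
    fun a => hrec a.1.1 a.1.2 a.2

theorem computable₂_reconstruct (hℓc : Computable ℓ) (hmc : Computable m) :
    Computable₂ (reconstruct ℓ m) :=
  have hk : Computable fun p : List Bool × List Bool => level m p.1.length :=
    (computable_level hmc).comp (Primrec.list_length.to_comp.comp Computable.fst)
  (Primrec.list_append.to_comp.comp ((computable₂_interleave hℓc hmc).comp Computable.id hk)
    (Primrec.list_drop.to_comp.comp (hmc.comp hk) Computable.fst) :)

theorem length_reconstruct (hℓ0 : ℓ 0 = 0) (hm : StrictMono m) (hm0 : m 0 = 0)
    (hgap : ∀ n, m (n + 1) - m n ≤ ℓ (n + 1) - ℓ n) {σ pad : List Bool}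
    (hpad : pad.length = padLength ℓ m σ) :
    (reconstruct ℓ m σ pad).length = σ.length + pad.length := by
  have hσ := m_level_le hm0 σ.length
  have := m_le_ℓ hm hgap hm0 (level m σ.length)
  rw [reconstruct, List.length_append, length_interleave hℓ0 hm hm0 hgap hσ hpad.ge,
    List.length_drop, hpad, padLength]
  omega

theorem exists_reconstruct_mem_of_mem_Phi (hℓ0 : ℓ 0 = 0) (hm : StrictMono m) (hm0 : m 0 = 0)
    (hgap : ∀ n, m (n + 1) - m n ≤ ℓ (n + 1) - ℓ n) {T : Set (List Bool)} (hT : IsTree T)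
    {σ : List Bool} (hσ : σ ∈ Phi ℓ m T) :
    ∃ pad : List Bool, pad.length = padLength ℓ m σ ∧ reconstruct ℓ m σ pad ∈ T := by
  obtain ⟨n, σ', hσ', ⟨τ', hτ'T, hτ'⟩, hpre⟩ := hσ
  obtain ⟨pad, hpad, rfl⟩ := exists_interleave_eq_of_mem_Hfam hℓ0 hm hm0 hgap hσ' hτ'
  obtain ⟨k, hkσ⟩ : ∃ k, level m σ.length = k := ⟨_, rfl⟩
  have hk : m k ≤ σ.length := hkσ ▸ m_level_le hm0 _
  have hk' : σ.length < m (k + 1) := hkσ ▸ lt_m_level_succ hm _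
  have hkn : k ≤ n := hm.le_iff_le.1 (hk.trans (hpre.length_le.trans hσ'.le))
  have hfree : ℓ k - m k ≤ ℓ n - m n := monotone_ℓ_sub_m hm hgap hm0 hkn
  refine ⟨pad.take (ℓ k - m k), by simp [padLength, hkσ]; omega, hT _ hτ'T _ ?_⟩
  have hσeq : σ = σ'.take σ.length := List.prefix_iff_eq_take.1 hpre
  have hhead : interleave ℓ m σ (pad.take (ℓ k - m k)) k = interleave ℓ m σ' pad k :=
    interleave_congr hm.monotone (monotone_ℓ_sub_m hm hgap hm0)
      (by rw [hσeq, List.take_take, min_eq_left hk]) (by simp)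
  have htail : σ.drop (m k) <+: (σ'.take (m (k + 1))).drop (m k) := by
    rw [hσeq]
    exact (List.take_prefix_take_left hk'.le).drop _
  rw [reconstruct, hkσ, hhead]
  exact ((List.prefix_append_right_inj _).2 htail).trans
    (interleave_append_block_prefix pad hσ'.le hkn)

end Reconstruct

theorem Optimal.exists_length_le_Kof_add_of_mem_Phi {U : PrefixFreeMachine} (hU : Optimal U)
    {ℓ m : ℕ → ℕ} (hℓc : Computable ℓ) (hmc : Computable m) (hℓ0 : ℓ 0 = 0)
    (hm : StrictMono m) (hm0 : m 0 = 0) (hgap : ∀ n, m (n + 1) - m n ≤ ℓ (n + 1) - ℓ n) :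
    ∃ d : ℕ, ∀ T : Set (List Bool), IsTree T → ∀ c : ℕ,
      (∀ τ ∈ T, (τ.length : ℕ∞) ≤ Kof U τ + c) →
        ∀ σ ∈ Phi ℓ m T, (σ.length : ℕ∞) ≤ Kof U σ + c + d := by
  obtain ⟨d, hd⟩ := hU.exists_Kof_apply_le (computable₂_reconstruct hℓc hmc)
    (computable_padLength hℓc hmc)
  refine ⟨d, fun T hT c hc σ hσ => ?_⟩
  obtain ⟨pad, hpad, hmem⟩ := exists_reconstruct_mem_of_mem_Phi hℓ0 hm hm0 hgap hT hσ
  refine (ENat.add_le_add_iff_right (ENat.natCast_ne_top pad.length)).1 ?_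
  calc (σ.length : ℕ∞) + pad.length
      = (reconstruct ℓ m σ pad).length := by
        rw [length_reconstruct hℓ0 hm hm0 hgap hpad]; push_cast; rfl
    _ ≤ Kof U (reconstruct ℓ m σ pad) + c := hc _ hmem
    _ ≤ Kof U σ + pad.length + d + c := add_le_add_left (hd σ pad hpad) _
    _ = Kof U σ + c + d + pad.length := by ring

theorem stmt_13_general (U : PrefixFreeMachine) (hU : Optimal U)
    (ℓ m : ℕ → ℕ) (hℓc : Computable ℓ) (hmc : Computable m)
    (hm : StrictMono m) (hℓ0 : ℓ 0 = 0) (hm0 : m 0 = 0)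
    (hgap : ∀ n : ℕ, m (n + 1) - m n ≤ ℓ (n + 1) - ℓ n) :
    (∀ T : Set (List Bool), Tell ℓ T →
        (Phi ℓ m T).Infinite ∧ IsTree (Phi ℓ m T) ∧ Pruned (Phi ℓ m T)) ∧
      (∃ d : ℕ, ∀ T : Set (List Bool), Tell ℓ T → ∀ c : ℕ,
        (∀ σ ∈ T, (σ.length : ℕ∞) ≤ Kof U σ + c) →
          ∀ σ ∈ Phi ℓ m T, (σ.length : ℕ∞) ≤ Kof U σ + c + d) ∧
      ∀ T : Set (List Bool), Tell ℓ T → PathIncompressible U T →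
        PathIncompressible U (Phi ℓ m T) := by
  obtain ⟨d, hd⟩ := hU.exists_length_le_Kof_add_of_mem_Phi hℓc hmc hℓ0 hm hm0 hgap
  refine ⟨fun T hT => ⟨hT.infinite_Phi hℓ0 hm hm0 hgap, isTree_Phi ℓ m T,
    hT.pruned_Phi hℓ0 hm hgap⟩, ⟨d, fun T hT => hd T hT.1⟩,
    fun T hT ⟨c, hc⟩ => ⟨c + d, fun σ hσ => ?_⟩⟩
  simpa [add_assoc] using hd T hT.1 c hc σ hσ

/-- For every `T ∈ 𝒯_ℓ`, `Φ(T)` is an infinite pruned tree; moreover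
there is a constant `d`, independent of `T` and `c`, such that whenever
`K(σ) ≥ |σ| - c` on `T`, we get `K(σ) ≥ |σ| - c - d` on `Φ(T)`. In particular `Φ`
preserves path-incompressibility. -/
theorem stmt_13 (U : PrefixFreeMachine) (hU : Optimal U)
    (ℓ m : ℕ → ℕ) (hℓc : Computable ℓ) (hmc : Computable m)
    (hℓ : StrictMono ℓ) (hm : StrictMono m) (hℓ0 : ℓ 0 = 0) (hm0 : m 0 = 0)
    (hgap : ∀ n : ℕ, m (n + 1) - m n ≤ ℓ (n + 1) - ℓ n) :
    (∀ T : Set (List Bool), Tell ℓ T →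
        (Phi ℓ m T).Infinite ∧ IsTree (Phi ℓ m T) ∧ Pruned (Phi ℓ m T)) ∧
      (∃ d : ℕ, ∀ T : Set (List Bool), Tell ℓ T → ∀ c : ℕ,
        (∀ σ ∈ T, (σ.length : ℕ∞) ≤ Kof U σ + c) →
          ∀ σ ∈ Phi ℓ m T, (σ.length : ℕ∞) ≤ Kof U σ + c + d) ∧
      ∀ T : Set (List Bool), Tell ℓ T → PathIncompressible U T →
        PathIncompressible U (Phi ℓ m T) :=
  stmt_13_general U hU ℓ m hℓc hmc hm hℓ0 hm0 hgap
end Interleave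
end
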